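/- Completeness of C₁ᴰ with respect to swap Kripke models: for every set of formulas Γ ∪ {φ} ⊆ For(Σ₁ᴰ), if Γ ⊨_{C₁ᴰ} φ then Γ ⊢_{C₁ᴰ} φ. -/

import Mathlib

/-- Formulas over the signature Σ₁ᴰ = {∧, ∨, →, ¬, O}, with countably many
propositional variables. -/
inductive Form : Type
  | var : ℕ → Form
  | and : Form → Form → Form
  | or : Form → Form → Form
  | imp : Form → Form → Form
  | neg : Form → Form
  | obl : Form → Form

namespace Form
/-- α° := ¬(α ∧ ¬α) -/
def cons (α : Form) : Form := (α.and α.neg).neg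
/-- ⊥_α := (α ∧ ¬α) ∧ α° -/
def bot (α : Form) : Form := (α.and α.neg).and α.cons
end Form

/-- Theorems of C₁ᴰ: CPL⁺ axioms, (EM), (cf), (bc)', (ca_#)' for # ∈ {∧,∨,→},
(ca_O)', (O-K), (O-E), with rules Modus Ponens and O-necessitation. -/
inductive ThmC1D : Form → Prop
  | A1 (α β : Form) : ThmC1D (α.imp (β.imp α))
  | A2 (α β γ : Form) : ThmC1D ((α.imp (β.imp γ)).imp ((α.imp β).imp (α.imp γ)))
  | A3 (α β : Form) : ThmC1D (α.imp (β.imp (α.and β)))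
  | A4 (α β : Form) : ThmC1D ((α.and β).imp α)
  | A5 (α β : Form) : ThmC1D ((α.and β).imp β)
  | A6 (α β : Form) : ThmC1D (α.imp (α.or β))
  | A7 (α β : Form) : ThmC1D (β.imp (α.or β))
  | A8 (α β γ : Form) : ThmC1D ((α.imp γ).imp ((β.imp γ).imp ((α.or β).imp γ)))
  | A9 (α β : Form) : ThmC1D (((α.imp β).imp α).imp α)
  | EM (α : Form) : ThmC1D (α.or α.neg)
  | cf (α : Form) : ThmC1D (α.neg.neg.imp α)
  | bc' (α β : Form) : ThmC1D (α.cons.imp (α.imp (α.neg.imp β)))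
  | caAnd' (α β : Form) : ThmC1D ((α.cons.and β.cons).imp (α.and β).cons)
  | caOr' (α β : Form) : ThmC1D ((α.cons.and β.cons).imp (α.or β).cons)
  | caImp' (α β : Form) : ThmC1D ((α.cons.and β.cons).imp (α.imp β).cons)
  | caO' (α : Form) : ThmC1D (α.cons.imp α.obl.cons)
  | OK (α β : Form) : ThmC1D ((α.imp β).obl.imp (α.obl.imp β.obl))
  | OE (α : Form) : ThmC1D (α.bot.obl.imp α.bot)
  | mp {α β : Form} : ThmC1D (α.imp β) → ThmC1D α → ThmC1D β
  | nec {α : Form} : ThmC1D α → ThmC1D α.obl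

/-- conj γ [γ₂,…,γ_k] = γ ∧ γ₂ ∧ … ∧ γ_k -/
def conj (γ : Form) : List Form → Form
  | [] => γ
  | δ :: l => γ.and (conj δ l)

/-- Γ ⊢_{C₁ᴰ} φ iff ⊢ φ or ⊢ (γ₁ ∧ … ∧ γ_k) → φ for some γ₁,…,γ_k ∈ Γ, k ≥ 1. -/
def DerivC1D (Γ : Set Form) (φ : Form) : Prop :=
  ThmC1D φ ∨ ∃ (γ : Form) (l : List Form),
    (∀ δ ∈ γ :: l, δ ∈ Γ) ∧ ThmC1D ((conj γ l).imp φ)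

/-- The three snapshots T = (1,0), t = (1,1), F = (0,1). -/
inductive SV : Type
  | T | t | F
deriving DecidableEq

/-- First coordinate of a snapshot. -/
def SV.p1 : SV → Bool
  | .T => true | .t => true | .F => false

/-- Second coordinate of a snapshot. -/
def SV.p2 : SV → Bool
  | .T => false | .t => true | .F => true

/-- Designated values: D = {T, t}, i.e. first coordinate is 1. -/
def SV.desig (a : SV) : Prop := a.p1 = true

/-- The Boolean (classical) snapshots {T, F}. -/
def SV.boo (a : SV) : Prop := a = SV.T ∨ a = SV.F

/-- Swap Kripke model conditions for C₁ᴰ on a serial frame (W,R):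
¬ is interpreted by ¬̃₁, O by Õ, and the valuations satisfy the DCila
restrictions together with: v_w(α) ∈ {T,F} implies v_w(Oα) ∈ {T,F}. -/
structure IsModelC1D {W : Type} (R : W → W → Prop) (v : W → Form → SV) : Prop where
  serial : ∀ w, ∃ w', R w w'
  and_ : ∀ w α β, (v w (α.and β)).p1 = ((v w α).p1 && (v w β).p1)
  or_ : ∀ w α β, (v w (α.or β)).p1 = ((v w α).p1 || (v w β).p1)
  imp_ : ∀ w α β, (v w (α.imp β)).p1 = (!(v w α).p1 || (v w β).p1)
  neg_ : ∀ w α, (v w α.neg).p1 = (v w α).p2 ∧ (v w α.neg).p2 ≤ (v w α).p1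
  obl_ : ∀ w α, ((v w α.obl).p1 = true ↔ ∀ w', R w w' → (v w' α).p1 = true)
  cl_ : ∀ w α, v w α = SV.t → v w (α.and α.neg) = SV.T
  booAnd : ∀ w α β, (v w α).boo → (v w β).boo → (v w (α.and β)).boo
  booOr : ∀ w α β, (v w α).boo → (v w β).boo → (v w (α.or β)).boo
  booImp : ∀ w α β, (v w α).boo → (v w β).boo → (v w (α.imp β)).boo
  booObl : ∀ w α, (v w α).boo → (v w α.obl).boo

/-- Γ ⊨_{C₁ᴰ} φ : semantic consequence over all swap Kripke models for C₁ᴰ. -/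
def SemC1D (Γ : Set Form) (φ : Form) : Prop :=
  ∀ (W : Type) (R : W → W → Prop) (v : W → Form → SV), Nonempty W →
    IsModelC1D R v → ∀ w : W, (∀ γ ∈ Γ, (v w γ).desig) → (v w φ).desig


/-!
Canonical model. The worlds are the ψ-saturated sets Δ (Δ ⊬ ψ, while Δ ∪ {α} ⊢ ψ for every
α ∉ Δ); by Zorn's lemma and compactness of ⊢ every Γ ⊬ ψ extends to one. A world Δ sees Δ'
when {β | Oβ ∈ Δ} ⊆ Δ', and α gets the value (⟦α ∈ Δ⟧, ⟦¬α ∈ Δ⟧). Since ⊢ commutes with O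
(necessitation and (O-K)), Oα ∈ Δ iff α belongs to every world Δ sees, and (O-E) makes the
relation serial. (EM) and (cf) turn the valuation into one for ¬̃₁, and by (bc)' the value of
α is Boolean exactly when α° ∈ Δ, so the axioms (ca)' give the Boolean-closure conditions.
-/

theorem ThmC1D.imp_self (α : Form) : ThmC1D (α.imp α) :=
  ((ThmC1D.A2 α (α.imp α) α).mp (ThmC1D.A1 _ _)).mp (ThmC1D.A1 _ _)

inductive Proves (Γ : Set Form) : Form → Prop
  | thm {φ : Form} : ThmC1D φ → Proves Γ φ
  | hyp {φ : Form} : φ ∈ Γ → Proves Γ φ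
  | mp {φ ψ : Form} : Proves Γ (φ.imp ψ) → Proves Γ φ → Proves Γ ψ

namespace Proves

variable {Γ Γ' : Set Form} {α β γ δ φ ψ χ : Form} {l : List Form}

theorem mp_of_thm (h : ThmC1D (φ.imp ψ)) (hφ : Proves Γ φ) : Proves Γ ψ :=
  mp (thm h) hφ

theorem trans (h : ∀ δ ∈ Γ', Proves Γ δ) (hφ : Proves Γ' φ) : Proves Γ φ := by
  induction hφ with
  | thm h' => exact thm h'
  | hyp h' => exact h _ h'
  | mp _ _ ih₁ ih₂ => exact mp ih₁ ih₂

theorem mono (h : Γ ⊆ Γ') (hφ : Proves Γ φ) : Proves Γ' φ :=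
  trans (fun _ hδ => hyp (h hδ)) hφ

theorem imp_intro (h : Proves (insert α Γ) β) : Proves Γ (α.imp β) := by
  induction h with
  | thm h => exact mp_of_thm (ThmC1D.A1 _ _) (thm h)
  | hyp h =>
    rcases h with rfl | h
    · exact thm (ThmC1D.imp_self _)
    · exact mp_of_thm (ThmC1D.A1 _ _) (hyp h)
  | mp _ _ ih₁ ih₂ => exact mp (mp_of_thm (ThmC1D.A2 _ _ _) ih₁) ih₂

theorem thmC1D_of_empty (h : Proves ∅ φ) : ThmC1D φ := by
  induction h with
  | thm h => exact h
  | hyp h => exact absurd h (Set.notMem_empty _)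
  | mp _ _ ih₁ ih₂ => exact ih₁.mp ih₂

theorem thmC1D_imp_of_singleton (h : Proves {α} β) : ThmC1D (α.imp β) :=
  thmC1D_of_empty (imp_intro (mono (Set.singleton_subset_iff.2 (Set.mem_insert α ∅)) h))

theorem exists_list (h : Proves Γ φ) :
    ∃ l : List Form, (∀ δ ∈ l, δ ∈ Γ) ∧ Proves {δ | δ ∈ l} φ := by
  induction h with
  | @thm φ h => exact ⟨[], by simp, thm h⟩
  | @hyp φ h => exact ⟨[φ], by simpa, hyp (List.mem_singleton_self φ)⟩
  | mp _ _ ih₁ ih₂ =>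
    obtain ⟨l₁, hl₁, h₁⟩ := ih₁
    obtain ⟨l₂, hl₂, h₂⟩ := ih₂
    refine ⟨l₁ ++ l₂, fun δ hδ => (List.mem_append.1 hδ).elim (hl₁ δ) (hl₂ δ), ?_⟩
    exact mp (h₁.mono fun _ => List.mem_append_left l₂) (h₂.mono fun _ => List.mem_append_right l₁)

theorem obl_image (h : Proves Γ φ) : Proves (Form.obl '' Γ) φ.obl := by
  induction h with
  | thm h => exact thm h.nec
  | hyp h => exact hyp (Set.mem_image_of_mem _ h)
  | mp _ _ ih₁ ih₂ => exact mp (mp_of_thm (ThmC1D.OK _ _) ih₁) ih₂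

theorem explosion (hc : Proves Γ α.cons) (hα : Proves Γ α) (hn : Proves Γ α.neg) :
    Proves Γ χ :=
  mp (mp (mp_of_thm (ThmC1D.bc' α χ) hc) hα) hn

theorem of_bot (h : Proves Γ α.bot) : Proves Γ χ :=
  have hαn : Proves Γ (α.and α.neg) := mp_of_thm (ThmC1D.A4 _ _) h
  explosion (mp_of_thm (ThmC1D.A5 _ _) h) (mp_of_thm (ThmC1D.A4 _ _) hαn)
    (mp_of_thm (ThmC1D.A5 _ _) hαn)

/-- From ψ → β and α we get ψ by `h₂`, hence β; so (ψ → β) → ψ, and Peirce's law gives ψ. -/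
theorem of_imp_imp_of_imp (h₁ : Proves Γ ((α.imp β).imp ψ)) (h₂ : Proves Γ (α.imp ψ)) :
    Proves Γ ψ := by
  refine mp_of_thm (ThmC1D.A9 ψ β) (imp_intro (mp (h₁.mono (Set.subset_insert _ _)) ?_))
  refine imp_intro (mp (hyp (Set.mem_insert_of_mem _ (Set.mem_insert _ _)))
    (mp ?_ (hyp (Set.mem_insert _ _))))
  exact h₂.mono ((Set.subset_insert _ _).trans (Set.subset_insert _ _))

theorem conj_of_forall (h : ∀ δ ∈ γ :: l, Proves Γ δ) : Proves Γ (conj γ l) := by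
  induction l generalizing γ with
  | nil => exact h γ List.mem_cons_self
  | cons ε l ih =>
    exact mp (mp_of_thm (ThmC1D.A3 _ _) (h γ List.mem_cons_self))
      (ih fun δ hδ => h δ (List.mem_cons_of_mem γ hδ))

theorem of_mem_conj (h : δ ∈ γ :: l) : Proves {conj γ l} δ := by
  induction l generalizing γ with
  | nil =>
    rw [List.mem_singleton.1 h]
    exact hyp rfl
  | cons ε l ih =>
    rcases List.mem_cons.1 h with rfl | h
    · exact mp_of_thm (ThmC1D.A4 _ _) (hyp rfl)
    · exact trans (by rintro _ rfl; exact mp_of_thm (ThmC1D.A5 _ _) (hyp rfl)) (ih h)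

end Proves

theorem derivC1D_iff_proves {Γ : Set Form} {φ : Form} : DerivC1D Γ φ ↔ Proves Γ φ := by
  constructor
  · rintro (h | ⟨γ, l, hmem, h⟩)
    · exact .thm h
    · exact .mp_of_thm h (.conj_of_forall fun δ hδ => .hyp (hmem δ hδ))
  · intro h
    obtain ⟨l, hmem, hl⟩ := h.exists_list
    cases l with
    | nil => exact .inl (hl.mono (by simp)).thmC1D_of_empty
    | cons γ l =>
      exact .inr ⟨γ, l, hmem, (hl.trans fun _ => Proves.of_mem_conj).thmC1D_imp_of_singleton⟩

structure SaturatedSet where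
  carrier : Set Form
  avoided : Form
  not_proves : ¬ Proves carrier avoided
  proves_insert : ∀ α ∉ carrier, Proves (insert α carrier) avoided

namespace SaturatedSet

theorem exists_superset {Γ : Set Form} {ψ : Form} (h : ¬ Proves Γ ψ) :
    ∃ Δ : SaturatedSet, Γ ⊆ Δ.carrier ∧ ψ ∉ Δ.carrier := by
  have chain_ub : ∀ c ⊆ {Δ | ¬ Proves Δ ψ}, IsChain (· ⊆ ·) c → c.Nonempty →
      ∃ ub ∈ {Δ | ¬ Proves Δ ψ}, ∀ s ∈ c, s ⊆ ub := by
    refine fun c hc hchain hne => ⟨⋃₀ c, fun hψ => ?_, fun _ => Set.subset_sUnion_of_mem⟩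
    obtain ⟨l, hl, hlψ⟩ := hψ.exists_list
    obtain ⟨t, htc, hlt⟩ := hchain.directedOn.exists_mem_subset_of_finite_of_subset_sUnion hne
      (List.finite_toSet l) hl
    exact hc htc (hlψ.mono hlt)
  obtain ⟨Δ, hΓΔ, hmax⟩ := zorn_subset_nonempty _ chain_ub Γ h
  exact ⟨⟨Δ, ψ, hmax.1, fun α hα => not_not.1 fun hα' => hα (hmax.mem_of_prop_insert hα')⟩,
    hΓΔ, fun hψ => hmax.1 (.hyp hψ)⟩

variable (Δ : SaturatedSet) {α β : Form}

theorem mem_of_proves (h : Proves Δ.carrier α) : α ∈ Δ.carrier :=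
  not_not.1 fun hα => Δ.not_proves (.mp (Δ.proves_insert α hα).imp_intro h)

theorem mem_of_thmC1D (h : ThmC1D α) : α ∈ Δ.carrier :=
  Δ.mem_of_proves (.thm h)

theorem mem_of_thmC1D_imp (h : ThmC1D (α.imp β)) (hα : α ∈ Δ.carrier) : β ∈ Δ.carrier :=
  Δ.mem_of_proves (.mp_of_thm h (.hyp hα))

theorem and_mem_iff : α.and β ∈ Δ.carrier ↔ α ∈ Δ.carrier ∧ β ∈ Δ.carrier :=
  ⟨fun h => ⟨Δ.mem_of_thmC1D_imp (.A4 _ _) h, Δ.mem_of_thmC1D_imp (.A5 _ _) h⟩,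
    fun ⟨hα, hβ⟩ => Δ.mem_of_proves (.mp (.mp_of_thm (.A3 _ _) (.hyp hα)) (.hyp hβ))⟩

theorem or_mem_iff : α.or β ∈ Δ.carrier ↔ α ∈ Δ.carrier ∨ β ∈ Δ.carrier := by
  refine ⟨fun h => ?_, fun h => h.elim (Δ.mem_of_thmC1D_imp (.A6 _ _))
    (Δ.mem_of_thmC1D_imp (.A7 _ _))⟩
  by_contra! hn
  exact Δ.not_proves (.mp (.mp (.mp_of_thm (.A8 α β _) (Δ.proves_insert α hn.1).imp_intro)
    (Δ.proves_insert β hn.2).imp_intro) (.hyp h))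

theorem imp_mem_iff : α.imp β ∈ Δ.carrier ↔ α ∉ Δ.carrier ∨ β ∈ Δ.carrier := by
  refine ⟨fun h => or_iff_not_imp_left.2 fun hα => Δ.mem_of_proves (.mp (.hyp h)
    (.hyp (not_not.1 hα))), fun h => ?_⟩
  by_contra hn
  refine Δ.not_proves (.of_imp_imp_of_imp (Δ.proves_insert _ hn).imp_intro ?_)
  rcases h with hα | hβ
  · exact (Δ.proves_insert α hα).imp_intro
  · exact absurd (Δ.mem_of_thmC1D_imp (.A1 _ _) hβ) hn

theorem mem_or_neg_mem (α : Form) : α ∈ Δ.carrier ∨ α.neg ∈ Δ.carrier :=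
  Δ.or_mem_iff.1 (Δ.mem_of_thmC1D (.EM α))

theorem cons_mem_iff : α.cons ∈ Δ.carrier ↔ ¬ (α ∈ Δ.carrier ∧ α.neg ∈ Δ.carrier) :=
  ⟨fun hc ⟨hα, hn⟩ => Δ.not_proves (.explosion (.hyp hc) (.hyp hα) (.hyp hn)),
    fun h => (Δ.mem_or_neg_mem _).resolve_left (mt Δ.and_mem_iff.1 h)⟩

theorem obl_mem_of_proves (h : Proves {β | β.obl ∈ Δ.carrier} α) : α.obl ∈ Δ.carrier :=
  Δ.mem_of_proves (h.obl_image.mono (by rintro _ ⟨β, hβ, rfl⟩; exact hβ))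

def CanonicalRel (Δ Δ' : SaturatedSet) : Prop :=
  ∀ β : Form, β.obl ∈ Δ.carrier → β ∈ Δ'.carrier

theorem exists_canonicalRel_not_mem (h : ¬ Proves {β | β.obl ∈ Δ.carrier} α) :
    ∃ Δ', CanonicalRel Δ Δ' ∧ α ∉ Δ'.carrier :=
  let ⟨Δ', hsub, hα⟩ := exists_superset h
  ⟨Δ', fun _ hβ => hsub hβ, hα⟩

theorem obl_mem_iff : α.obl ∈ Δ.carrier ↔ ∀ Δ', CanonicalRel Δ Δ' → α ∈ Δ'.carrier := by
  refine ⟨fun h Δ' hR => hR α h, fun h => not_not.1 fun hα => ?_⟩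
  obtain ⟨Δ', hR, hα'⟩ := Δ.exists_canonicalRel_not_mem (mt Δ.obl_mem_of_proves hα)
  exact hα' (h Δ' hR)

theorem exists_canonicalRel : ∃ Δ', CanonicalRel Δ Δ' :=
  let ⟨Δ', hR, _⟩ := Δ.exists_canonicalRel_not_mem (α := (Form.var 0).bot) fun h =>
    Δ.not_proves (.of_bot (.mp_of_thm (.OE _) (.hyp (Δ.obl_mem_of_proves h))))
  ⟨Δ', hR⟩

end SaturatedSet

open Classical in
noncomputable def canonicalVal (Δ : SaturatedSet) (α : Form) : SV :=
  if α ∈ Δ.carrier then (if α.neg ∈ Δ.carrier then .t else .T) else .F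

section canonicalVal

variable {Δ : SaturatedSet} {α : Form}

theorem canonicalVal_p1 : (canonicalVal Δ α).p1 = true ↔ α ∈ Δ.carrier := by
  unfold canonicalVal; split_ifs <;> simp_all [SV.p1]

theorem canonicalVal_p2 : (canonicalVal Δ α).p2 = true ↔ α.neg ∈ Δ.carrier := by
  have := Δ.mem_or_neg_mem α
  unfold canonicalVal; split_ifs <;> simp_all [SV.p2]

theorem canonicalVal_boo_iff : (canonicalVal Δ α).boo ↔ α.cons ∈ Δ.carrier := by
  unfold canonicalVal; split_ifs <;> simp_all [SV.boo, Δ.cons_mem_iff]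

theorem canonicalVal_eq_t_iff :
    canonicalVal Δ α = .t ↔ α ∈ Δ.carrier ∧ α.neg ∈ Δ.carrier := by
  unfold canonicalVal; split_ifs <;> simp_all

theorem canonicalVal_eq_T_iff :
    canonicalVal Δ α = .T ↔ α ∈ Δ.carrier ∧ α.neg ∉ Δ.carrier := by
  unfold canonicalVal; split_ifs <;> simp_all

end canonicalVal

theorem isModelC1D_canonical : IsModelC1D SaturatedSet.CanonicalRel canonicalVal where
  serial Δ := Δ.exists_canonicalRel
  and_ Δ α β := Bool.eq_iff_iff.2 (by simp [canonicalVal_p1, Δ.and_mem_iff])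
  or_ Δ α β := Bool.eq_iff_iff.2 (by simp [canonicalVal_p1, Δ.or_mem_iff])
  imp_ Δ α β :=
    Bool.eq_iff_iff.2 (by simp [canonicalVal_p1, Δ.imp_mem_iff, ← Bool.not_eq_true])
  neg_ Δ α := ⟨Bool.eq_iff_iff.2 (canonicalVal_p1.trans canonicalVal_p2.symm),
    Bool.le_iff_imp.2 fun h =>
      canonicalVal_p1.2 (Δ.mem_of_thmC1D_imp (.cf α) (canonicalVal_p2.1 h))⟩
  obl_ Δ α := by simpa only [canonicalVal_p1] using Δ.obl_mem_iff
  cl_ Δ α h := by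
    obtain ⟨hα, hn⟩ := canonicalVal_eq_t_iff.1 h
    exact canonicalVal_eq_T_iff.2 ⟨Δ.and_mem_iff.2 ⟨hα, hn⟩, fun hc =>
      (Δ.cons_mem_iff.1 hc) ⟨hα, hn⟩⟩
  booAnd Δ α β hα hβ := canonicalVal_boo_iff.2 (Δ.mem_of_thmC1D_imp (.caAnd' α β)
    (Δ.and_mem_iff.2 ⟨canonicalVal_boo_iff.1 hα, canonicalVal_boo_iff.1 hβ⟩))
  booOr Δ α β hα hβ := canonicalVal_boo_iff.2 (Δ.mem_of_thmC1D_imp (.caOr' α β)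
    (Δ.and_mem_iff.2 ⟨canonicalVal_boo_iff.1 hα, canonicalVal_boo_iff.1 hβ⟩))
  booImp Δ α β hα hβ := canonicalVal_boo_iff.2 (Δ.mem_of_thmC1D_imp (.caImp' α β)
    (Δ.and_mem_iff.2 ⟨canonicalVal_boo_iff.1 hα, canonicalVal_boo_iff.1 hβ⟩))
  booObl Δ α hα := canonicalVal_boo_iff.2 (Δ.mem_of_thmC1D_imp (.caO' α)
    (canonicalVal_boo_iff.1 hα))

/-- Completeness of C₁ᴰ w.r.t. swap Kripke models. -/
theorem C1D_completeness (Γ : Set Form) (φ : Form) :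
    SemC1D Γ φ → DerivC1D Γ φ := by
  intro hsem
  rw [derivC1D_iff_proves]
  by_contra hφ
  obtain ⟨Δ, hΓΔ, hφΔ⟩ := SaturatedSet.exists_superset hφ
  exact hφΔ (canonicalVal_p1.1 (hsem _ _ _ ⟨Δ⟩ isModelC1D_canonical Δ
    fun γ hγ => canonicalVal_p1.2 (hΓΔ hγ)))
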